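/- arXiv:2404.05770 — 3 statements merged into one kernel-verified Lean document; each statement's English description precedes it below -/
import Mathlib

section
/- Σ_{n=1}^∞ (−1)^{n−1} 9^n / (n² · C(4n,2n)) = −2π²/9 + 2 ln²(2 + √3). -/
/-!
The numbers `a n = 4 ^ n / (2 n² C(2n, n))` are the coefficients of `arcsin² w = ∑ a n w ^ (2n)`.
With `F y = ∑ a n y ^ n`, the recurrence `(n + 1)(2n + 1) a (n + 1) = 2 n² a n` (and `a 1 = 1`)
is the differential equation `2y(1 - y) F'' + (1 - 2y) F' = 1` on the unit disc. Along
`σ ↦ sin (σ z)` it says that the derivative `F' (sin² (σ z)) sin (2σz) z - 2σz²` of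
`σ ↦ F (sin² (σ z)) - σ² z²` is constant, hence zero, so `F (sin² z) = z²` whenever
`sin (σ z)` stays in the unit disc for `σ ∈ [0, 1]`.

For `z₀ = π/6 + i log(2 + √3)/2` one has `sin² z₀ = 3i/4`. Adding the identities at `z₀` and
`conj z₀` cancels the odd powers of `3i/4`; the surviving terms of index `2m + 2` are `-1/4` times
the terms of the series, and `z₀² + conj z₀² = π²/18 - log²(2 + √3)/2`.
-/

open Complex Set Filter Asymptotics
open scoped Real ComplexConjugate

section PowerSeries

def derivCoeff (c : ℕ → ℂ) (n : ℕ) : ℂ := (n + 1) * c (n + 1)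

variable {c : ℕ → ℂ} {k : ℕ}

lemma isBigO_natCast_add_one :
    (fun n : ℕ => (n : ℂ) + 1) =O[atTop] fun n : ℕ => (n : ℂ) := by
  refine IsBigO.of_bound 2 ?_
  filter_upwards [eventually_ge_atTop 1] with n hn
  have hn' : (1 : ℝ) ≤ n := by exact_mod_cast hn
  calc ‖(n : ℂ) + 1‖ ≤ ‖(n : ℂ)‖ + ‖(1 : ℂ)‖ := norm_add_le _ _
    _ ≤ 2 * ‖(n : ℂ)‖ := by simp only [norm_natCast, norm_one]; linarith

lemma derivCoeff_isBigO (hc : c =O[atTop] fun n : ℕ => (n : ℂ) ^ k) :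
    derivCoeff c =O[atTop] fun n : ℕ => (n : ℂ) ^ (k + 1) := by
  have hshift : (fun n => c (n + 1)) =O[atTop] fun n : ℕ => ((n : ℂ) + 1) ^ k := by
    simpa [Function.comp_def] using hc.comp_tendsto (tendsto_add_atTop_nat 1)
  show (fun n : ℕ => ((n : ℂ) + 1) * c (n + 1)) =O[atTop] _
  simpa [pow_succ, mul_comm] using
    isBigO_natCast_add_one.mul (hshift.trans (isBigO_natCast_add_one.pow k))

lemma summable_norm_mul_pow (hc : c =O[atTop] fun n : ℕ => (n : ℂ) ^ k) {y : ℂ}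
    (hy : ‖y‖ < 1) : Summable fun n => ‖c n * y ^ n‖ :=
  summable_norm_mul_geometric_of_norm_lt_one' hy (by simpa using hc)

lemma hasDerivAt_tsum_mul_pow (hc : c =O[atTop] fun n : ℕ => (n : ℂ) ^ k) {x : ℂ}
    (hx : ‖x‖ < 1) :
    HasDerivAt (fun y => ∑' n, c n * y ^ n) (∑' n, derivCoeff c n * x ^ n) x := by
  obtain ⟨r, hxr, hr⟩ := exists_between hx
  have hball : ∀ y ∈ Metric.ball (0 : ℂ) r, ‖y‖ < 1 := fun y hy =>
    (mem_ball_zero_iff.mp hy).trans hr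
  have hr' : ‖(r : ℂ)‖ < 1 := by
    rwa [norm_real, Real.norm_of_nonneg ((norm_nonneg x).trans hxr.le)]
  have htail : HasDerivAt (fun y => ∑' n, c (n + 1) * y ^ (n + 1))
      (∑' n, derivCoeff c n * x ^ n) x := by
    refine hasDerivAt_tsum_of_isPreconnected (g := fun n y => c (n + 1) * y ^ (n + 1))
      (g' := fun n y => derivCoeff c n * y ^ n)
      (summable_norm_mul_pow (derivCoeff_isBigO hc) hr')
      Metric.isOpen_ball (convex_ball 0 r).isPreconnected (fun n y _ => ?_) (fun n y hy => ?_)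
      (Metric.mem_ball_self ((norm_nonneg x).trans_lt hxr)) (summable_zero.congr fun n => by simp)
      (mem_ball_zero_iff.mpr hxr)
    · simpa [derivCoeff, mul_comm, mul_assoc] using
        (hasDerivAt_pow (n + 1) y).const_mul (c (n + 1))
    · rw [norm_mul, norm_mul, norm_pow, norm_pow, norm_real,
        Real.norm_of_nonneg ((norm_nonneg x).trans hxr.le)]
      gcongr
      exact (mem_ball_zero_iff.mp hy).le
  have heq : (fun y => ∑' n, c n * y ^ n) =ᶠ[nhds x]
      fun y => c 0 + ∑' n, c (n + 1) * y ^ (n + 1) := by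
    filter_upwards [Metric.isOpen_ball.mem_nhds (mem_ball_zero_iff.mpr hxr)] with y hy
    simpa using (summable_norm_mul_pow hc (hball y hy)).of_norm.tsum_eq_zero_add
  exact (htail.const_add (c 0)).congr_of_eventuallyEq heq

lemma HasSum.natCast_mul_mul_pow {y s : ℂ}
    (h : HasSum (fun n => derivCoeff c n * y ^ n) s) :
    HasSum (fun n => n * c n * y ^ n) (y * s) := by
  rw [← hasSum_nat_add_iff' 1]
  simpa [derivCoeff, pow_succ, mul_comm, mul_assoc, mul_left_comm] using h.mul_left y

end PowerSeries

-- At `n = 0` the formula divides by zero; Lean's `x / 0 = 0` gives the correct constant term.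
noncomputable def arcsinSqCoeff (n : ℕ) : ℂ := 4 ^ n / (2 * n ^ 2 * n.centralBinom)

lemma arcsinSqCoeff_zero : arcsinSqCoeff 0 = 0 := by simp [arcsinSqCoeff]

lemma norm_arcsinSqCoeff_le_one (n : ℕ) : ‖arcsinSqCoeff n‖ ≤ 1 := by
  rcases Nat.eq_zero_or_pos n with rfl | hn
  · simp [arcsinSqCoeff_zero]
  have h4 : (4 : ℝ) ^ n ≤ 2 * n * n.centralBinom := by
    exact_mod_cast Nat.four_pow_le_two_mul_self_mul_centralBinom n hn
  have hn' : (1 : ℝ) ≤ n := by exact_mod_cast hn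
  have hc : (0 : ℝ) < n.centralBinom := by exact_mod_cast n.centralBinom_pos
  rw [arcsinSqCoeff, norm_div, div_le_one (by simp; positivity)]
  simp only [norm_pow, norm_mul, norm_natCast, Complex.norm_ofNat]
  nlinarith [mul_le_mul_of_nonneg_left hn' (by positivity : (0 : ℝ) ≤ 2 * n * n.centralBinom)]

lemma arcsinSqCoeff_isBigO : arcsinSqCoeff =O[atTop] fun n : ℕ => (n : ℂ) ^ 0 :=
  IsBigO.of_bound 1 (Eventually.of_forall fun n => by simpa using norm_arcsinSqCoeff_le_one n)

lemma succ_mul_two_mul_add_one_mul_arcsinSqCoeff_succ (n : ℕ) :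
    ((n : ℂ) + 1) * (2 * n + 1) * arcsinSqCoeff (n + 1) = 4 ^ n / n.centralBinom := by
  have h : ((n : ℂ) + 1) * (n + 1).centralBinom = 2 * (2 * n + 1) * n.centralBinom := by
    exact_mod_cast Nat.succ_mul_centralBinom_succ n
  have hc : (n.centralBinom : ℂ) ≠ 0 := by exact_mod_cast n.centralBinom_ne_zero
  have hc' : ((n + 1).centralBinom : ℂ) ≠ 0 := by exact_mod_cast (n + 1).centralBinom_ne_zero
  have hn : (n : ℂ) + 1 ≠ 0 := by exact_mod_cast n.succ_ne_zero
  rw [arcsinSqCoeff]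
  field_simp
  push_cast
  linear_combination (-2 : ℂ) * 4 ^ n * ((n : ℂ) + 1) * h

lemma two_mul_sq_mul_arcsinSqCoeff {n : ℕ} (hn : n ≠ 0) :
    2 * (n : ℂ) ^ 2 * arcsinSqCoeff n = 4 ^ n / n.centralBinom := by
  have hc : (n.centralBinom : ℂ) ≠ 0 := by exact_mod_cast n.centralBinom_ne_zero
  have hn' : (n : ℂ) ≠ 0 := by exact_mod_cast hn
  rw [arcsinSqCoeff]
  field_simp

lemma arcsinSqCoeff_recurrence (n : ℕ) :
    (2 * n + 1) * derivCoeff arcsinSqCoeff n - 2 * (n : ℂ) ^ 2 * arcsinSqCoeff n =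
      if n = 0 then 1 else 0 := by
  rw [derivCoeff, ← mul_assoc, mul_comm (2 * (n : ℂ) + 1),
    succ_mul_two_mul_add_one_mul_arcsinSqCoeff_succ]
  split_ifs with hn
  · simp [hn]
  · rw [two_mul_sq_mul_arcsinSqCoeff hn, sub_self]

lemma arcsinSq_ode {y : ℂ} (hy : ‖y‖ < 1) :
    2 * y * (1 - y) * ∑' n, derivCoeff (derivCoeff arcsinSqCoeff) n * y ^ n
      + (1 - 2 * y) * ∑' n, derivCoeff arcsinSqCoeff n * y ^ n = 1 := by
  set a := arcsinSqCoeff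
  have ha₁ := derivCoeff_isBigO arcsinSqCoeff_isBigO
  have h₁ := (summable_norm_mul_pow ha₁ hy).of_norm.hasSum
  have h₂ := (summable_norm_mul_pow (derivCoeff_isBigO ha₁) hy).of_norm.hasSum
  set F₁ := ∑' n, derivCoeff a n * y ^ n
  set F₂ := ∑' n, derivCoeff (derivCoeff a) n * y ^ n
  -- Multiplying by `y` turns `derivCoeff c` into `n * c n`, so the left side is the series with
  -- coefficients `(2n + 1) derivCoeff a n - 2 n² a n`, which the recurrence evaluates.
  have hθ₁ := h₂.natCast_mul_mul_pow
  have hθ₂ : HasSum (fun n => derivCoeff (fun m => m * a m) n * y ^ n) (y * F₂ + F₁) :=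
    (hθ₁.add h₁).congr_fun fun n => by simp only [derivCoeff]; push_cast; ring
  have hθθ := hθ₂.natCast_mul_mul_pow
  have hsum := (h₁.add (hθ₁.mul_left 2)).sub (hθθ.mul_left 2)
  have hone : HasSum (fun n =>
      (2 * n + 1) * derivCoeff a n * y ^ n - 2 * (n : ℂ) ^ 2 * a n * y ^ n) 1 := by
    convert hasSum_ite_eq 0 (1 : ℂ) using 1
    funext n
    rw [← sub_mul, arcsinSqCoeff_recurrence]
    split_ifs with hn <;> simp [hn]
  have := hsum.unique (hone.congr_fun fun n => by ring)
  linear_combination this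

lemma eqOn_Icc_of_hasDerivAt_zero {E : Type*} [NormedAddCommGroup E] [NormedSpace ℝ E]
    {f : ℝ → E} {a b : ℝ}
    (h : ∀ x ∈ Icc a b, HasDerivAt f 0 x) :
    ∀ x ∈ Icc a b, f x = f a :=
  constant_of_has_deriv_right_zero (fun x hx => (h x hx).continuousAt.continuousWithinAt)
    fun x hx => (h x (Ico_subset_Icc_self hx)).hasDerivWithinAt

lemma hasDerivAt_sin_mul_sq (z ζ : ℂ) :
    HasDerivAt (fun ζ => sin (ζ * z) ^ 2) (sin (2 * (ζ * z)) * z) ζ := by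
  refine (((hasDerivAt_id ζ).mul_const z).csin.pow 2).congr_deriv ?_
  rw [sin_two_mul]; simp; ring

-- The function differentiated here is the `σ`-derivative of `F (sin (σ z) ^ 2) - σ ^ 2 z ^ 2`.
lemma arcsinSq_ode_along_sin (z : ℂ) {σ : ℝ} (hσ : ‖sin (σ * z)‖ < 1) :
    HasDerivAt (fun τ : ℝ => (∑' n, derivCoeff arcsinSqCoeff n * (sin (τ * z) ^ 2) ^ n) *
      (sin (2 * (τ * z)) * z) - 2 * τ * z ^ 2) 0 σ := by
  have hy : ‖sin (σ * z) ^ 2‖ < 1 := by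
    rw [norm_pow]; exact pow_lt_one₀ (norm_nonneg _) hσ two_ne_zero
  have hF₁ := (hasDerivAt_tsum_mul_pow (derivCoeff_isBigO arcsinSqCoeff_isBigO) hy).comp
    (σ : ℂ) (hasDerivAt_sin_mul_sq z σ)
  have hsin : HasDerivAt (fun ζ : ℂ => sin (2 * (ζ * z)) * z)
      (cos (2 * (σ * z)) * (2 * z) * z) σ := by
    refine ((((hasDerivAt_id (σ : ℂ)).mul_const z).const_mul 2).csin.mul_const z).congr_deriv ?_
    simp
  have hlin : HasDerivAt (fun ζ : ℂ => 2 * ζ * z ^ 2) (2 * z ^ 2) σ := by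
    simpa using ((hasDerivAt_id (σ : ℂ)).const_mul 2).mul_const (z ^ 2)
  refine ((hF₁.mul hsin).sub hlin).comp_ofReal.congr_deriv ?_
  have hode := arcsinSq_ode hy
  have hpyth := cos_sq_add_sin_sq ((σ : ℂ) * z)
  simp only [Function.comp_def, sin_two_mul, cos_two_mul]
  set F₁ := ∑' n, derivCoeff arcsinSqCoeff n * (sin (σ * z) ^ 2) ^ n
  set F₂ := ∑' n, derivCoeff (derivCoeff arcsinSqCoeff) n * (sin (σ * z) ^ 2) ^ n
  linear_combination (2 * z ^ 2) * hode + 4 * z ^ 2 * (F₂ * sin (σ * z) ^ 2 + F₁) * hpyth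

lemma hasSum_arcsinSqCoeff_mul_sin_sq_pow (z : ℂ)
    (hz : ∀ σ ∈ Icc (0 : ℝ) 1, ‖sin (σ * z)‖ < 1) :
    HasSum (fun n => arcsinSqCoeff n * (sin z ^ 2) ^ n) (z ^ 2) := by
  set F := fun y => ∑' n, arcsinSqCoeff n * y ^ n
  have hy : ∀ σ ∈ Icc (0 : ℝ) 1, ‖sin (σ * z) ^ 2‖ < 1 := fun σ hσ => by
    rw [norm_pow]; exact pow_lt_one₀ (norm_nonneg _) (hz σ hσ) two_ne_zero
  have hderiv : ∀ σ ∈ Icc (0 : ℝ) 1,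
      HasDerivAt (fun τ : ℝ => F (sin (τ * z) ^ 2) - τ ^ 2 * z ^ 2) 0 σ := fun σ hσ => by
    have hF := (hasDerivAt_tsum_mul_pow arcsinSqCoeff_isBigO (hy σ hσ)).comp (σ : ℂ)
      (hasDerivAt_sin_mul_sq z σ)
    have hsq : HasDerivAt (fun ζ : ℂ => ζ ^ 2 * z ^ 2) (2 * σ * z ^ 2) σ := by
      simpa using (hasDerivAt_pow 2 (σ : ℂ)).mul_const (z ^ 2)
    refine (hF.sub hsq).comp_ofReal.congr_deriv ?_
    simpa using eqOn_Icc_of_hasDerivAt_zero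
      (fun τ hτ => arcsinSq_ode_along_sin z (hz τ hτ)) σ hσ
  have hF₀ : F 0 = 0 := by
    show ∑' n, arcsinSqCoeff n * (0 : ℂ) ^ n = 0
    rw [tsum_eq_single 0 fun n hn => by simp [hn]]
    simp [arcsinSqCoeff_zero]
  have h₁ : F (sin z ^ 2) = z ^ 2 := by
    simpa [hF₀, sub_eq_zero] using
      eqOn_Icc_of_hasDerivAt_zero hderiv 1 (right_mem_Icc.mpr zero_le_one)
  have hz₁ : ‖sin z ^ 2‖ < 1 := by simpa using hy 1 (right_mem_Icc.mpr zero_le_one)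
  exact h₁ ▸ (summable_norm_mul_pow arcsinSqCoeff_isBigO hz₁).of_norm.hasSum

lemma norm_sin_add_mul_I_sq (x y : ℝ) :
    ‖sin (x + y * I)‖ ^ 2 = Real.sin x ^ 2 + Real.sinh y ^ 2 := by
  rw [sin_add_mul_I, ← ofReal_sin, ← ofReal_cos, ← ofReal_sinh, ← ofReal_cosh, Complex.sq_norm,
    normSq_apply]
  simp only [add_re, mul_re, ofReal_re, ofReal_im, I_re, I_im, add_im, mul_im]
  nlinarith [Real.cosh_sq y, Real.sin_sq_add_cos_sq x]

lemma inv_two_add_sqrt_three : (2 + √3 : ℝ)⁻¹ = 2 - √3 := by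
  refine inv_eq_of_mul_eq_one_right ?_
  nlinarith [Real.sq_sqrt (show (0 : ℝ) ≤ 3 by norm_num)]

lemma cosh_log_two_add_sqrt_three : Real.cosh (Real.log (2 + √3)) = 2 := by
  rw [Real.cosh_log (by positivity), inv_two_add_sqrt_three]; ring

lemma sinh_log_two_add_sqrt_three : Real.sinh (Real.log (2 + √3)) = √3 := by
  rw [Real.sinh_log (by positivity), inv_two_add_sqrt_three]; ring

noncomputable def z₀ : ℂ := (π / 6 : ℝ) + (Real.log (2 + √3) / 2 : ℝ) * I

lemma sin_z₀_sq : sin z₀ ^ 2 = 3 / 4 * I := by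
  have h : 2 * z₀ = (π / 3 : ℝ) + (Real.log (2 + √3) : ℝ) * I := by
    simp only [z₀]; push_cast; ring
  rw [sin_sq, cos_sq, h, cos_add_mul_I, ← ofReal_cos, ← ofReal_sin, ← ofReal_cosh, ← ofReal_sinh,
    Real.cos_pi_div_three, Real.sin_pi_div_three, cosh_log_two_add_sqrt_three,
    sinh_log_two_add_sqrt_three]
  push_cast
  have h3 : ((√3 : ℝ) : ℂ) ^ 2 = 3 := by exact_mod_cast Real.sq_sqrt (by norm_num : (0 : ℝ) ≤ 3)
  linear_combination I / 4 * h3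

lemma norm_sin_ofReal_mul_z₀_lt_one {σ : ℝ} (hσ : σ ∈ Icc (0 : ℝ) 1) :
    ‖sin (σ * z₀)‖ < 1 := by
  obtain ⟨h₀, h₁⟩ := hσ
  have h : (σ : ℂ) * z₀ = (σ * (π / 6) : ℝ) + (σ * (Real.log (2 + √3) / 2) : ℝ) * I := by
    simp only [z₀]; push_cast; ring
  have hsin : Real.sin (σ * (π / 6)) ^ 2 ≤ 1 / 4 := by
    have hle : Real.sin (σ * (π / 6)) ≤ 1 / 2 := by
      rw [← Real.sin_pi_div_six]
      apply Real.sin_le_sin_of_le_of_le_pi_div_two <;> nlinarith [Real.pi_pos]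
    nlinarith [Real.sin_nonneg_of_nonneg_of_le_pi (by positivity : 0 ≤ σ * (π / 6))
      (by nlinarith [Real.pi_pos])]
  have hsinh : Real.sinh (σ * (Real.log (2 + √3) / 2)) ^ 2 ≤ 1 / 2 := by
    have hL : 0 ≤ Real.log (2 + √3) := Real.log_nonneg (by linarith [Real.sqrt_nonneg 3])
    have hle : Real.sinh (σ * (Real.log (2 + √3) / 2)) ≤ Real.sinh (Real.log (2 + √3) / 2) :=
      Real.sinh_le_sinh.mpr (by nlinarith)
    have hhalf : Real.sinh (Real.log (2 + √3) / 2) ^ 2 = 1 / 2 := by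
      have := Real.cosh_two_mul (Real.log (2 + √3) / 2)
      rw [mul_div_cancel₀ _ two_ne_zero, cosh_log_two_add_sqrt_three, Real.cosh_sq] at this
      linarith
    nlinarith [Real.sinh_nonneg_iff.mpr (by positivity : 0 ≤ σ * (Real.log (2 + √3) / 2))]
  rw [h, ← sq_lt_one_iff₀ (norm_nonneg _), norm_sin_add_mul_I_sq]
  linarith

lemma hasSum_arcsinSqCoeff_mul_pow_z₀ :
    HasSum (fun n => arcsinSqCoeff n * (3 / 4 * I) ^ n) (z₀ ^ 2) :=
  sin_z₀_sq ▸ hasSum_arcsinSqCoeff_mul_sin_sq_pow z₀ fun _ => norm_sin_ofReal_mul_z₀_lt_one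

lemma hasSum_arcsinSqCoeff_mul_pow_conj_z₀ :
    HasSum (fun n => arcsinSqCoeff n * (-(3 / 4 * I)) ^ n) (conj z₀ ^ 2) := by
  have hconj (z : ℂ) (σ : ℝ) : sin (σ * conj z) = conj (sin (σ * z)) := by
    rw [← sin_conj, map_mul, conj_ofReal]
  have hsq : sin (conj z₀) ^ 2 = -(3 / 4 * I) := by
    rw [sin_conj, ← map_pow, sin_z₀_sq, map_mul, conj_I, map_div₀, map_ofNat, map_ofNat]
    ring
  refine hsq ▸ hasSum_arcsinSqCoeff_mul_sin_sq_pow _ fun σ hσ => ?_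
  rw [hconj, norm_conj]
  exact norm_sin_ofReal_mul_z₀_lt_one hσ

lemma hasSum_comp_two_mul_add_two {c : ℕ → ℂ} (hc : c 0 = 0) {y s t : ℂ}
    (hs : HasSum (fun n => c n * y ^ n) s) (ht : HasSum (fun n => c n * (-y) ^ n) t) :
    HasSum (fun m => c (2 * m + 2) * (y ^ (2 * m + 2) + (-y) ^ (2 * m + 2))) (s + t) := by
  set f := fun n => c n * (y ^ n + (-y) ^ n)
  have hinj : Function.Injective fun m : ℕ => 2 * m + 2 := fun a b h => by simpa using h
  have hf : ∀ n ∉ range fun m : ℕ => 2 * m + 2, f n = 0 := fun n hn => by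
    rcases n.even_or_odd with ⟨k, rfl⟩ | hodd
    · obtain rfl : k = 0 := by
        by_contra hk
        exact hn ⟨k - 1, show 2 * (k - 1) + 2 = k + k by omega⟩
      simp [f, hc]
    · simp [f, hodd.neg_pow]
  exact (hinj.hasSum_iff (f := f) hf).mpr
    ((hs.add ht).congr_fun fun n => by simp only [f]; ring)

lemma arcsinSqCoeff_mul_even_pow (m : ℕ) :
    arcsinSqCoeff (2 * m + 2) * ((3 / 4 * I) ^ (2 * m + 2) + (-(3 / 4 * I)) ^ (2 * m + 2)) =
      -(1 / 4) * ((-1) ^ m * 9 ^ (m + 1) /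
        (((m : ℂ) + 1) ^ 2 * (Nat.choose (4 * (m + 1)) (2 * (m + 1)) : ℂ))) := by
  have hC : (2 * m + 2).centralBinom = Nat.choose (4 * (m + 1)) (2 * (m + 1)) := by
    rw [Nat.centralBinom]; ring_nf
  have hC₀ : (Nat.choose (4 * (m + 1)) (2 * (m + 1)) : ℂ) ≠ 0 := by
    exact_mod_cast (hC ▸ (2 * m + 2).centralBinom_ne_zero)
  have hpow (x : ℂ) : x ^ (2 * m + 2) = (x ^ 2) ^ (m + 1) := by rw [← pow_mul]; ring_nf
  have hm : (m : ℂ) + 1 ≠ 0 := by exact_mod_cast m.succ_ne_zero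
  have hsq : (3 / 4 * I) ^ 2 = -1 * 9 / 16 := by rw [mul_pow, I_sq]; ring
  rw [arcsinSqCoeff, Even.neg_pow ⟨m + 1, by ring⟩, hpow, hpow, hsq, div_pow, mul_pow, hC]
  push_cast
  field_simp
  ring

theorem stmt_3 :
    ∑' n : ℕ, (-1 : ℝ) ^ n * 9 ^ (n + 1) /
      (((n : ℝ) + 1) ^ 2 * (Nat.choose (4 * (n + 1)) (2 * (n + 1)) : ℝ)) =
    -2 * Real.pi ^ 2 / 9 + 2 * (Real.log (2 + Real.sqrt 3)) ^ 2 := by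
  have h := (hasSum_comp_two_mul_add_two arcsinSqCoeff_zero hasSum_arcsinSqCoeff_mul_pow_z₀
    hasSum_arcsinSqCoeff_mul_pow_conj_z₀).mul_left (-4)
  have hvalue : -4 * (z₀ ^ 2 + conj z₀ ^ 2) =
      ((-2 * Real.pi ^ 2 / 9 + 2 * (Real.log (2 + Real.sqrt 3)) ^ 2 : ℝ) : ℂ) := by
    simp only [z₀, map_add, map_mul, conj_ofReal, conj_I]
    push_cast
    linear_combination (-2 * (Real.log (2 + √3) : ℂ) ^ 2) * I_sq
  simp only [arcsinSqCoeff_mul_even_pow, hvalue] at h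
  refine (hasSum_ofReal.mp (h.congr_fun fun m => ?_)).tsum_eq
  push_cast
  ring
end

section
/- Σ_{n=1}^∞ (−1)^{n−1} 9^n / (n · C(4n,2n)) = −2√3·π/15 + (4√3/5)·ln(2 + √3). -/
/-! Since `1 / (k * C(2k, k)) = B(k, k + 1) = ∫₀¹ x^(k-1) (1-x)^k dx`, the `n`-th term is
`∫₀¹ 18 x (1-x)² (-9 x² (1-x)²)^(n-1) dx`. As `9 x² (1-x)² ≤ 9/16` on `[0, 1]`, the geometric
series may be summed under the integral, leaving `∫₀¹ 18 x (1-x)² / (1 + 9 x² (1-x)²) dx`.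
Over `ℚ(√3)` the denominator splits into two quadratics, and partial fractions give a primitive
built from logarithms and arctangents; its values at `0` and `1` involve `log (2 ± √3)` and
`arctan (√3 - 2) + arctan (√3 + 2) = π / 3`. -/

open Real intervalIntegral MeasureTheory
open scoped Nat

theorem mul_integral_pow_mul_one_sub_pow_succ (a b : ℕ) :
    (a + 1 : ℝ) * ∫ x in (0 : ℝ)..1, x ^ a * (1 - x) ^ (b + 1) =
      (b + 1) * ∫ x in (0 : ℝ)..1, x ^ (a + 1) * (1 - x) ^ b := by
  have hderiv : ∀ x : ℝ, HasDerivAt (fun x : ℝ ↦ x ^ (a + 1) * (1 - x) ^ (b + 1))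
      ((a + 1) * (x ^ a * (1 - x) ^ (b + 1)) - (b + 1) * (x ^ (a + 1) * (1 - x) ^ b)) x := by
    intro x
    refine ((hasDerivAt_pow (a + 1) x).fun_mul
      (((hasDerivAt_id' x).const_sub 1).fun_pow (b + 1))).congr_deriv ?_
    simp only [Nat.add_sub_cancel]
    push_cast
    ring
  have hint : ∀ c d : ℕ, IntervalIntegrable (fun x : ℝ ↦ x ^ c * (1 - x) ^ d) volume 0 1 :=
    fun c d ↦ (by fun_prop : Continuous fun x : ℝ ↦ x ^ c * (1 - x) ^ d).intervalIntegrable 0 1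
  have hFTC := integral_eq_sub_of_hasDerivAt (fun x _ ↦ hderiv x)
    (((hint a (b + 1)).const_mul _).sub ((hint (a + 1) b).const_mul _))
  rw [integral_sub ((hint a (b + 1)).const_mul _) ((hint (a + 1) b).const_mul _),
    intervalIntegral.integral_const_mul, intervalIntegral.integral_const_mul] at hFTC
  norm_num at hFTC
  linarith

theorem integral_pow_mul_one_sub_pow (a b : ℕ) :
    ∫ x in (0 : ℝ)..1, x ^ a * (1 - x) ^ b = a ! * b ! / (a + b + 1)! := by
  induction b generalizing a with
  | zero =>
    rw [add_zero, Nat.factorial_succ, Nat.factorial_zero]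
    push_cast
    rw [mul_one, mul_comm, ← div_div, div_self (by positivity)]
    simp [integral_pow]
  | succ b ih =>
    have h := mul_integral_pow_mul_one_sub_pow_succ a b
    rw [ih, show a + 1 + b + 1 = a + (b + 1) + 1 by ring] at h
    rw [eq_div_iff (by positivity)]
    rw [Nat.factorial_succ a, Nat.factorial_succ b] at *
    push_cast at h ⊢
    field_simp at h
    linear_combination h

theorem one_div_succ_mul_centralBinom_succ (k : ℕ) :
    1 / ((k + 1 : ℝ) * (k + 1).centralBinom) = ∫ x in (0 : ℝ)..1, x ^ k * (1 - x) ^ (k + 1) := by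
  have h := Nat.add_choose_mul_factorial_mul_factorial (k + 1) (k + 1)
  rw [← two_mul, ← Nat.centralBinom_eq_two_mul_choose] at h
  rw [integral_pow_mul_one_sub_pow, show k + (k + 1) + 1 = 2 * (k + 1) by ring, ← h,
    Nat.factorial_succ k]
  push_cast
  field_simp

theorem hasSum_intervalIntegral_mul_pow {g r : ℝ → ℝ} {a b q : ℝ} (hg : Continuous g)
    (hr : Continuous r) (hq₀ : 0 ≤ q) (hq₁ : q < 1) (hrq : ∀ x ∈ Set.uIoc a b, |r x| ≤ q) :
    HasSum (fun n : ℕ ↦ ∫ x in a..b, g x * r x ^ n) (∫ x in a..b, g x / (1 - r x)) := by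
  have hsum : ∀ x, HasSum (fun n : ℕ ↦ |g x| * q ^ n) (|g x| * (1 - q)⁻¹) :=
    fun x ↦ (hasSum_geometric_of_lt_one hq₀ hq₁).mul_left _
  refine hasSum_integral_of_dominated_convergence (fun n x ↦ |g x| * q ^ n)
    (fun n ↦ (hg.mul (hr.pow n)).aestronglyMeasurable) (fun n ↦ ?_)
    (ae_of_all _ fun x _ ↦ (hsum x).summable) ?_ (ae_of_all _ fun x hx ↦ ?_)
  · refine ae_of_all _ fun x hx ↦ ?_
    rw [norm_mul, norm_pow, Real.norm_eq_abs, Real.norm_eq_abs]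
    exact mul_le_mul_of_nonneg_left (pow_le_pow_left₀ (abs_nonneg _) (hrq x hx) n)
      (abs_nonneg _)
  · simp_rw [(hsum _).tsum_eq]
    exact (hg.abs.mul continuous_const).intervalIntegrable a b
  · have hr₁ : ‖r x‖ < 1 := (hrq x hx).trans_lt hq₁
    simpa [div_eq_mul_inv] using (hasSum_geometric_of_norm_lt_one hr₁).mul_left (g x)

namespace CentralBinomSeries

variable {ε : ℝ}

def quadFactor (ε x : ℝ) : ℝ := 3 * x ^ 2 - (3 + 2 * ε) * x + (2 + ε)

noncomputable def logArctanPrimitive (ε x : ℝ) : ℝ :=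
  (1 / 2 - ε / 5) * log (quadFactor ε x) - ε / 5 * arctan (ε * (2 * x - 1) - 2)

theorem one_add_sq_eq_four_mul_quadFactor (hε : ε ^ 2 = 3) (x : ℝ) :
    1 + (ε * (2 * x - 1) - 2) ^ 2 = 4 * quadFactor ε x := by
  unfold quadFactor
  linear_combination (2 * x - 1) ^ 2 * hε

theorem quadFactor_pos (hε : ε ^ 2 = 3) (x : ℝ) : 0 < quadFactor ε x := by
  have := one_add_sq_eq_four_mul_quadFactor hε x
  nlinarith [sq_nonneg (ε * (2 * x - 1) - 2)]

theorem quadFactor_mul_quadFactor_neg (hε : ε ^ 2 = 3) (x : ℝ) :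
    quadFactor ε x * quadFactor (-ε) x = 1 + 9 * (x * (1 - x)) ^ 2 := by
  unfold quadFactor
  linear_combination -(2 * x - 1) ^ 2 * hε

theorem hasDerivAt_logArctanPrimitive (hε : ε ^ 2 = 3) (x : ℝ) :
    HasDerivAt (logArctanPrimitive ε)
      ((15 * x - 6 * ε * x - 3 - 2 * ε) / (5 * quadFactor ε x)) x := by
  have hq : HasDerivAt (quadFactor ε) (6 * x - (3 + 2 * ε)) x := by
    unfold quadFactor
    refine ((((hasDerivAt_pow 2 x).const_mul 3).sub
      ((hasDerivAt_id' x).const_mul _)).add_const _).congr_deriv ?_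
    ring
  have hl : HasDerivAt (fun x ↦ ε * (2 * x - 1) - 2) (2 * ε) x := by
    refine ((((hasDerivAt_id' x).const_mul 2).sub_const 1).const_mul ε |>.sub_const 2).congr_deriv
      ?_
    ring
  have hpos := quadFactor_pos hε x
  refine (((hq.log hpos.ne').const_mul _).sub
    (((hasDerivAt_arctan _).comp x hl).const_mul _)).congr_deriv ?_
  rw [one_add_sq_eq_four_mul_quadFactor hε]
  field_simp
  linear_combination 12 * hε

theorem div_quadFactor_add_div_quadFactor_neg (hε : ε ^ 2 = 3) (x : ℝ) :
    (15 * x - 6 * ε * x - 3 - 2 * ε) / (5 * quadFactor ε x) +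
      (15 * x - 6 * -ε * x - 3 - 2 * -ε) / (5 * quadFactor (-ε) x) =
      18 * x * (1 - x) ^ 2 / (1 + 9 * (x * (1 - x)) ^ 2) := by
  have hε' : (-ε) ^ 2 = 3 := by rwa [neg_sq]
  have h₁ := (quadFactor_pos hε x).ne'
  have h₂ := (quadFactor_pos hε' x).ne'
  have key : (15 * x - 6 * ε * x - 3 - 2 * ε) * quadFactor (-ε) x +
      (15 * x - 6 * -ε * x - 3 - 2 * -ε) * quadFactor ε x = 90 * x * (1 - x) ^ 2 := by
    unfold quadFactor
    linear_combination -2 * (6 * x + 2) * (2 * x - 1) * hε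
  rw [← quadFactor_mul_quadFactor_neg hε, div_add_div _ _ (by positivity) (by positivity),
    div_eq_div_iff (by positivity) (by positivity)]
  linear_combination 5 * quadFactor ε x * quadFactor (-ε) x * key

theorem logArctanPrimitive_one :
    logArctanPrimitive ε 1 = (1 / 2 - ε / 5) * log (2 - ε) - ε / 5 * arctan (ε - 2) := by
  rw [logArctanPrimitive, quadFactor]
  ring_nf

theorem logArctanPrimitive_zero :
    logArctanPrimitive ε 0 = (1 / 2 - ε / 5) * log (2 + ε) + ε / 5 * arctan (ε + 2) := by
  rw [logArctanPrimitive, quadFactor, show ε * (2 * 0 - 1) - 2 = -(ε + 2) by ring, arctan_neg]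
  ring_nf

theorem log_two_sub_sqrt_three : log (2 - √3) = -log (2 + √3) := by
  have hs : √3 ^ 2 = 3 := sq_sqrt (by norm_num)
  rw [eq_neg_iff_add_eq_zero, ← log_mul (by nlinarith) (by positivity)]
  rw [show (2 - √3) * (2 + √3) = 1 by linear_combination -hs, log_one]

theorem arctan_sqrt_three_sub_two_add_arctan_add_two :
    arctan (√3 - 2) + arctan (√3 + 2) = π / 3 := by
  have hs : √3 ^ 2 = 3 := sq_sqrt (by norm_num)
  rw [arctan_add (by nlinarith), ← arctan_sqrt_three]
  congr 1
  rw [div_eq_iff (by nlinarith)]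
  linear_combination √3 * hs

theorem integral_div_one_add_nine_mul_sq :
    ∫ x in (0 : ℝ)..1, 18 * x * (1 - x) ^ 2 / (1 + 9 * (x * (1 - x)) ^ 2) =
      -2 * √3 * π / 15 + 4 * √3 / 5 * log (2 + √3) := by
  have hs : √3 ^ 2 = 3 := sq_sqrt (by norm_num)
  have hs' : (-√3) ^ 2 = 3 := by rwa [neg_sq]
  have hderiv : ∀ x, HasDerivAt (fun x ↦ logArctanPrimitive √3 x + logArctanPrimitive (-√3) x)
      (18 * x * (1 - x) ^ 2 / (1 + 9 * (x * (1 - x)) ^ 2)) x := fun x ↦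
    ((hasDerivAt_logArctanPrimitive hs x).add (hasDerivAt_logArctanPrimitive hs' x)).congr_deriv
      (div_quadFactor_add_div_quadFactor_neg hs x)
  have hcont : Continuous fun x : ℝ ↦ 18 * x * (1 - x) ^ 2 / (1 + 9 * (x * (1 - x)) ^ 2) :=
    by fun_prop (disch := intro x; positivity)
  rw [integral_eq_sub_of_hasDerivAt (fun x _ ↦ hderiv x) (hcont.intervalIntegrable 0 1)]
  simp only [logArctanPrimitive_one, logArctanPrimitive_zero, sub_neg_eq_add, ← sub_eq_add_neg]
  have h₁ : arctan (-√3 - 2) = -arctan (√3 + 2) := by rw [← arctan_neg]; ring_nf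
  have h₂ : arctan (-√3 + 2) = -arctan (√3 - 2) := by rw [← arctan_neg]; ring_nf
  rw [h₁, h₂, log_two_sub_sqrt_three]
  linear_combination -2 * √3 / 5 * arctan_sqrt_three_sub_two_add_arctan_add_two

theorem term_eq_integral (n : ℕ) :
    (-1 : ℝ) ^ n * 9 ^ (n + 1) / ((n + 1) * (Nat.choose (4 * (n + 1)) (2 * (n + 1)) : ℝ)) =
      ∫ x in (0 : ℝ)..1, 18 * x * (1 - x) ^ 2 * (-9 * (x * (1 - x)) ^ 2) ^ n := by
  have hchoose : Nat.choose (4 * (n + 1)) (2 * (n + 1)) = (2 * n + 1 + 1).centralBinom := by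
    rw [Nat.centralBinom_eq_two_mul_choose]
    ring_nf
  have hintegrand : ∀ x : ℝ, 18 * x * (1 - x) ^ 2 * (-9 * (x * (1 - x)) ^ 2) ^ n =
      18 * (-9) ^ n * (x ^ (2 * n + 1) * (1 - x) ^ (2 * n + 1 + 1)) := fun x ↦ by
    rw [mul_pow, ← pow_mul, mul_pow]
    ring
  simp_rw [hintegrand, intervalIntegral.integral_const_mul,
    ← one_div_succ_mul_centralBinom_succ, hchoose, neg_pow (9 : ℝ)]
  push_cast
  field_simp
  ring

end CentralBinomSeries

theorem stmt_4 :
    ∑' n : ℕ, (-1 : ℝ) ^ n * 9 ^ (n + 1) /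
      (((n : ℝ) + 1) * (Nat.choose (4 * (n + 1)) (2 * (n + 1)) : ℝ)) =
    -2 * Real.sqrt 3 * Real.pi / 15 + (4 * Real.sqrt 3 / 5) * Real.log (2 + Real.sqrt 3) := by
  have hbound : ∀ x ∈ Set.uIoc (0 : ℝ) 1, |-9 * (x * (1 - x)) ^ 2| ≤ 9 / 16 := by
    rw [Set.uIoc_of_le zero_le_one]
    rintro x ⟨hx₀, hx₁⟩
    rw [abs_le]
    constructor <;> nlinarith [sq_nonneg (2 * x - 1), mul_nonneg hx₀.le (sub_nonneg.2 hx₁)]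
  have hsum := hasSum_intervalIntegral_mul_pow (g := fun x ↦ 18 * x * (1 - x) ^ 2)
    (r := fun x ↦ -9 * (x * (1 - x)) ^ 2) (by fun_prop) (by fun_prop) (by norm_num) (by norm_num)
    hbound
  calc _ = ∑' n : ℕ, ∫ x in (0 : ℝ)..1, 18 * x * (1 - x) ^ 2 * (-9 * (x * (1 - x)) ^ 2) ^ n :=
        tsum_congr CentralBinomSeries.term_eq_integral
    _ = ∫ x in (0 : ℝ)..1, 18 * x * (1 - x) ^ 2 / (1 - -9 * (x * (1 - x)) ^ 2) := hsum.tsum_eq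
    _ = ∫ x in (0 : ℝ)..1, 18 * x * (1 - x) ^ 2 / (1 + 9 * (x * (1 - x)) ^ 2) := by
        simp only [neg_mul, sub_neg_eq_add]
    _ = _ := CentralBinomSeries.integral_div_one_add_nine_mul_sq
end

section
/- Σ_{n=1}^∞ (−1)^{n−1} (16/3)^n / C(4n,2n) = 1/4 + (√6/8)·ln(√2 + √3). -/
/-!
The Beta integral gives `1 / C(4m, 2m) = (4m + 1) ∫₀¹ (x (1 - x))^(2m) dx`, so the series is
`-∫₀¹ ∑_{m ≥ 1} (4m + 1) r(x)^m dx` with `r(x) = -(16/3) x² (1 - x)²`. Since `|r| ≤ 1/3` on `[0, 1]`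
the summation and integration commute, and the inner sum is the rational function
`r (5 - r) / (1 - r)²`. After the shift `s = x - 1/2` its denominator becomes a power of
`4s⁴ - 2s² + 1 = (2s² + √6 s + 1)(2s² - √6 s + 1)`, which produces an elementary antiderivative
with a logarithmic part; at `s = ±1/2` the two quadratic factors are `(3 ± √6)/2`, whose ratio is
`(√2 + √3)²`.
-/

open Real intervalIntegral Set
open scoped Nat Interval

theorem integral_mul_one_sub_pow (k : ℕ) :
    ∫ x in (0 : ℝ)..1, (x * (1 - x)) ^ k = 1 / ((2 * k + 1) * ((2 * k).choose k : ℝ)) := by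
  have hbeta : ((∫ x in (0 : ℝ)..1, (x * (1 - x)) ^ k : ℝ) : ℂ) =
      Complex.betaIntegral (k + 1) (k + 1) := by
    rw [Complex.betaIntegral, ← intervalIntegral.integral_ofReal]
    refine intervalIntegral.integral_congr fun x _ => ?_
    push_cast [mul_pow]
    simp [Complex.cpow_natCast]
  have hsum : (k : ℂ) + 1 + (k + 1) = ((2 * k + 1 : ℕ) : ℂ) + 1 := by push_cast; ring
  have hfact : (2 * k + 1)! = (2 * k + 1) * ((2 * k).choose k * k ! * k !) := by
    rw [two_mul, Nat.add_choose_mul_factorial_mul_factorial, Nat.factorial_succ]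
  rw [Complex.betaIntegral_eq_Gamma_mul_div _ _ (by simp; positivity) (by simp; positivity), hsum,
    Complex.Gamma_nat_eq_factorial, Complex.Gamma_nat_eq_factorial, hfact] at hbeta
  apply Complex.ofReal_injective
  rw [hbeta]
  have hk : (k ! : ℂ) ≠ 0 := Nat.cast_ne_zero.mpr k.factorial_ne_zero
  push_cast
  field_simp

theorem hasSum_four_mul_add_five_mul_pow_succ {𝕜 : Type*} [NormedField 𝕜] [CompleteSpace 𝕜]
    {w : 𝕜} (hw : ‖w‖ < 1) :
    HasSum (fun n : ℕ => (4 * n + 5) * w ^ (n + 1)) (w * (5 - w) / (1 - w) ^ 2) := by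
  have hw1 : 1 - w ≠ 0 := by
    intro h
    rw [sub_eq_zero] at h
    simp [← h] at hw
  have h := ((hasSum_coe_mul_geometric_of_norm_lt_one hw).mul_left 4).add
    (hasSum_geometric_of_norm_lt_one hw)
  rw [← hasSum_nat_add_iff' 1, Finset.sum_range_one] at h
  have hsum : 4 * (w / (1 - w) ^ 2) + (1 - w)⁻¹ - (4 * (((0 : ℕ) : 𝕜) * w ^ 0) + w ^ 0) =
      w * (5 - w) / (1 - w) ^ 2 := by
    field_simp
    ring
  rw [hsum] at h
  exact h.congr_fun fun n => by push_cast; ring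

noncomputable def seriesRatio (x : ℝ) : ℝ := -(16 / 3) * (x * (1 - x)) ^ 2

theorem norm_seriesRatio_le {x : ℝ} (hx : x ∈ Icc 0 1) : ‖seriesRatio x‖ ≤ 1 / 3 := by
  have h : (x * (1 - x)) ^ 2 ≤ 1 / 16 := by
    nlinarith [sq_nonneg (x - 1 / 2), mul_nonneg hx.1 (sub_nonneg.2 hx.2)]
  rw [seriesRatio, Real.norm_eq_abs, abs_mul, abs_of_nonneg (sq_nonneg (x * (1 - x)))]
  norm_num
  linarith

theorem alternating_div_choose_eq_integral (n : ℕ) :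
    (-1 : ℝ) ^ n * (16 / 3) ^ (n + 1) / ((4 * (n + 1)).choose (2 * (n + 1)) : ℝ) =
      ∫ x in (0 : ℝ)..1, -((4 * n + 5) * seriesRatio x ^ (n + 1)) := by
  have hint := integral_mul_one_sub_pow (2 * (n + 1))
  rw [show 2 * (2 * (n + 1)) = 4 * (n + 1) by ring] at hint
  have hC : ((4 * (n + 1)).choose (2 * (n + 1)) : ℝ) ≠ 0 :=
    Nat.cast_ne_zero.mpr (Nat.choose_pos (by omega)).ne'
  have hfun : ∀ x : ℝ, -((4 * n + 5) * seriesRatio x ^ (n + 1)) =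
      (-1) ^ n * (16 / 3) ^ (n + 1) * (4 * n + 5) * (x * (1 - x)) ^ (2 * (n + 1)) :=
    fun x => by rw [seriesRatio, mul_pow, neg_pow, ← pow_mul]; ring
  simp_rw [hfun]
  rw [intervalIntegral.integral_const_mul, hint]
  push_cast
  field_simp
  ring

theorem hasSum_integral_seriesRatio :
    HasSum (fun n : ℕ => ∫ x in (0 : ℝ)..1, -((4 * n + 5) * seriesRatio x ^ (n + 1)))
      (∫ x in (0 : ℝ)..1, -(seriesRatio x * (5 - seriesRatio x) / (1 - seriesRatio x) ^ 2)) := by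
  have hle : ∀ x ∈ Ι (0 : ℝ) 1, ‖seriesRatio x‖ ≤ 1 / 3 := fun x hx =>
    norm_seriesRatio_le (Ioc_subset_Icc_self (by rwa [uIoc_of_le zero_le_one] at hx))
  have hbound := hasSum_four_mul_add_five_mul_pow_succ (by norm_num : ‖(1 / 3 : ℝ)‖ < 1)
  refine intervalIntegral.hasSum_integral_of_dominated_convergence
    (fun n _ => (4 * n + 5) * (1 / 3 : ℝ) ^ (n + 1))
    (fun n => (by unfold seriesRatio; fun_prop : Continuous _).aestronglyMeasurable)
    (fun n => Filter.Eventually.of_forall fun x hx => ?_)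
    (Filter.Eventually.of_forall fun _ _ => hbound.summable) intervalIntegrable_const
    (Filter.Eventually.of_forall fun x hx =>
      (hasSum_four_mul_add_five_mul_pow_succ ((hle x hx).trans_lt (by norm_num))).neg)
  rw [norm_neg, norm_mul, norm_pow, Real.norm_of_nonneg (by positivity)]
  gcongr
  exact hle x hx

theorem two_mul_sq_add_sqrt_six_mul_add_one_pos (s : ℝ) : 0 < 2 * s ^ 2 + √6 * s + 1 := by
  nlinarith [sq_nonneg (4 * s + √6), sq_sqrt (show (0 : ℝ) ≤ 6 by norm_num)]

theorem two_mul_sq_sub_sqrt_six_mul_add_one_pos (s : ℝ) : 0 < 2 * s ^ 2 - √6 * s + 1 := by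
  nlinarith [sq_nonneg (4 * s - √6), sq_sqrt (show (0 : ℝ) ≤ 6 by norm_num)]

theorem four_mul_pow_four_sub_two_mul_sq_add_one_pos (s : ℝ) : 0 < 4 * s ^ 4 - 2 * s ^ 2 + 1 := by
  nlinarith [sq_nonneg (2 * s ^ 2 - 1 / 2)]

theorem hasDerivAt_log_sub_log (s : ℝ) :
    HasDerivAt (fun s => log (2 * s ^ 2 + √6 * s + 1) - log (2 * s ^ 2 - √6 * s + 1))
      (2 * √6 * (1 - 2 * s ^ 2) / (4 * s ^ 4 - 2 * s ^ 2 + 1)) s := by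
  have hA := two_mul_sq_add_sqrt_six_mul_add_one_pos s
  have hB := two_mul_sq_sub_sqrt_six_mul_add_one_pos s
  have hprod : (2 * s ^ 2 + √6 * s + 1) * (2 * s ^ 2 - √6 * s + 1) =
      4 * s ^ 4 - 2 * s ^ 2 + 1 := by
    linear_combination (-s ^ 2) * sq_sqrt (show (0 : ℝ) ≤ 6 by norm_num)
  have hsq := (hasDerivAt_pow 2 s).const_mul (2 : ℝ)
  have hlin := (hasDerivAt_id s).const_mul √6
  have h := (((hsq.add hlin).add_const 1).log hA.ne').sub
    (((hsq.sub hlin).add_const 1).log hB.ne')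
  refine h.congr_deriv ?_
  dsimp
  rw [div_sub_div _ _ hA.ne' hB.ne', hprod]
  ring

noncomputable def seriesPrimitive (s : ℝ) : ℝ :=
  s + √6 / 32 * (log (2 * s ^ 2 + √6 * s + 1) - log (2 * s ^ 2 - √6 * s + 1)) -
    3 / 8 * (s * (2 * s ^ 2 + 1) / (4 * s ^ 4 - 2 * s ^ 2 + 1))

theorem hasDerivAt_seriesPrimitive (s : ℝ) :
    HasDerivAt seriesPrimitive
      (1 + 9 / (4 * (4 * s ^ 4 - 2 * s ^ 2 + 1)) - 9 / (4 * (4 * s ^ 4 - 2 * s ^ 2 + 1) ^ 2)) s := by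
  have hD := four_mul_pow_four_sub_two_mul_sq_add_one_pos s
  have hrat := ((hasDerivAt_id s).mul (((hasDerivAt_pow 2 s).const_mul 2).add_const 1)).div
    ((((hasDerivAt_pow 4 s).const_mul 4).sub ((hasDerivAt_pow 2 s).const_mul 2)).add_const 1)
    hD.ne'
  have h := ((hasDerivAt_id s).add ((hasDerivAt_log_sub_log s).const_mul (√6 / 32))).sub
    (hrat.const_mul (3 / 8))
  refine h.congr_deriv ?_
  -- the form in which `field_simp` meets the denominator
  have hD' : s ^ 2 * (s ^ 2 * 4 - 2) + 1 ≠ 0 := by linarith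
  dsimp
  field_simp
  rw [sq_sqrt (by norm_num)]
  ring

theorem log_three_add_sqrt_six_div_two :
    log ((3 + √6) / 2) = log ((3 - √6) / 2) + 2 * log (√2 + √3) := by
  have h6 := sq_sqrt (show (0 : ℝ) ≤ 6 by norm_num)
  have hpos : 0 < (3 - √6) / 2 := by nlinarith [sqrt_nonneg 6]
  have hsq : (√2 + √3) ^ 2 = 5 + 2 * √6 := by
    have h23 : √2 * √3 = √6 := by rw [← sqrt_mul (by norm_num)]; norm_num
    linear_combination sq_sqrt (show (0 : ℝ) ≤ 2 by norm_num) +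
      sq_sqrt (show (0 : ℝ) ≤ 3 by norm_num) + 2 * h23
  have hfactor : (3 + √6) / 2 = (3 - √6) / 2 * (√2 + √3) ^ 2 := by
    rw [hsq]
    linear_combination h6
  rw [hfactor, log_mul hpos.ne' (by positivity), log_pow]
  push_cast
  ring

theorem seriesPrimitive_half_sub_seriesPrimitive_neg_half :
    seriesPrimitive (1 / 2) - seriesPrimitive (-(1 / 2)) = 1 / 4 + √6 / 8 * log (√2 + √3) := by
  have hA : 2 * (1 / 2 : ℝ) ^ 2 + √6 * (1 / 2) + 1 = (3 + √6) / 2 := by ring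
  have hB : 2 * (1 / 2 : ℝ) ^ 2 - √6 * (1 / 2) + 1 = (3 - √6) / 2 := by ring
  have hA' : 2 * (-(1 / 2) : ℝ) ^ 2 - √6 * (-(1 / 2)) + 1 = (3 + √6) / 2 := by ring
  have hB' : 2 * (-(1 / 2) : ℝ) ^ 2 + √6 * (-(1 / 2)) + 1 = (3 - √6) / 2 := by ring
  rw [seriesPrimitive, seriesPrimitive, hA, hB, hA', hB', log_three_add_sqrt_six_div_two]
  ring

theorem integral_seriesRatio :
    ∫ x in (0 : ℝ)..1, -(seriesRatio x * (5 - seriesRatio x) / (1 - seriesRatio x) ^ 2) =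
      1 / 4 + √6 / 8 * log (√2 + √3) := by
  set f : ℝ → ℝ := fun s =>
    1 + 9 / (4 * (4 * s ^ 4 - 2 * s ^ 2 + 1)) - 9 / (4 * (4 * s ^ 4 - 2 * s ^ 2 + 1) ^ 2)
  have hrational : ∀ D : ℝ, D ≠ 0 →
      -((1 - 4 / 3 * D) * (5 - (1 - 4 / 3 * D)) / (1 - (1 - 4 / 3 * D)) ^ 2) =
        1 + 9 / (4 * D) - 9 / (4 * D ^ 2) := by
    intro D hD
    field_simp
    ring
  have hshift : ∀ x : ℝ,
      -(seriesRatio x * (5 - seriesRatio x) / (1 - seriesRatio x) ^ 2) = f (x - 1 / 2) := by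
    intro x
    rw [show seriesRatio x = 1 - 4 / 3 * (4 * (x - 1 / 2) ^ 4 - 2 * (x - 1 / 2) ^ 2 + 1) by
      rw [seriesRatio]; ring]
    exact hrational _ (four_mul_pow_four_sub_two_mul_sq_add_one_pos _).ne'
  have hcont : Continuous f := by
    have hD := four_mul_pow_four_sub_two_mul_sq_add_one_pos
    fun_prop (disch := intro s; have := hD s; positivity)
  rw [integral_congr fun x _ => hshift x, integral_comp_sub_right f (1 / 2),
    integral_eq_sub_of_hasDerivAt (fun s _ => hasDerivAt_seriesPrimitive s)
      (hcont.intervalIntegrable _ _)]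
  norm_num [seriesPrimitive_half_sub_seriesPrimitive_neg_half]

theorem stmt_14 :
    ∑' n : ℕ, (-1 : ℝ) ^ n * (16 / 3) ^ (n + 1) /
      (Nat.choose (4 * (n + 1)) (2 * (n + 1)) : ℝ) =
    1 / 4 + (Real.sqrt 6 / 8) * Real.log (Real.sqrt 2 + Real.sqrt 3) := by
  rw [tsum_congr alternating_div_choose_eq_integral, hasSum_integral_seriesRatio.tsum_eq,
    integral_seriesRatio]
end
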